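/- arXiv:1403.6061 — 2 statements merged into one kernel-verified Lean document; each statement's English description precedes it below -/
import Mathlib

section
/- If an even nondegenerate lattice S of signature (t_+, t_-) admits a primitive embedding into an even unimodular lattice L of signature (l_+, l_-), then t_+ ≤ l_+, t_- ≤ l_-, and the minimal number of generators l(A_S) of the discriminant group A_S = S^*/S satisfies l(A_S) ≤ (l_+ + l_-) − (t_+ + t_-). -/
/-!
For the signatures: conjugating by the diagonalising matrices turns the embedding into a real
matrix `C` with `Cᵀ D_L C = D_S`, where `D` are the diagonal sign matrices. In block form the
top-left block `A` of `C` satisfies `AᵀA = 1 + BᵀB`, which is positive definite, so the `l₊ × t₊`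
matrix `A` has rank `t₊`; the bottom-right block gives `t₋ ≤ l₋` in the same way.

For the discriminant group, write the embedding as an integer matrix `M` with `Mᵀ G_L M = G_S`, so
that `S = M ℤⁿ`. Primitivity makes `ℤᴺ / M ℤⁿ` torsion-free, hence free of rank `N - n`, so `M ℤⁿ`
is a direct summand of `ℤᴺ` and `z ↦ z M` (on row vectors) maps `ℤᴺ` onto `ℤⁿ`. As `G_L` is
unimodular, `x ↦ x G_L M G_S⁻¹` then maps `ℤᴺ` onto `S^* = ℤⁿ G_S⁻¹` and sends `M w` to `w ∈ S`.
Hence `A_S` is a quotient of `ℤᴺ / M ℤⁿ`.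
-/

open Matrix

/-- The bilinear form on `ℚ^n` given by an integer Gram matrix `G`. -/
def bilin {n : ℕ} (G : Matrix (Fin n) (Fin n) ℤ) (x y : Fin n → ℚ) : ℚ :=
  x ⬝ᵥ (G.map (Int.cast : ℤ → ℚ)).mulVec y

/-- The standard lattice `ℤ^n ⊆ ℚ^n`. -/
def latticeZ (n : ℕ) : Submodule ℤ (Fin n → ℚ) :=
  Submodule.span ℤ (Set.range fun i : Fin n => (Pi.single i 1 : Fin n → ℚ))

/-- Vectors of `ℚ^n` pairing integrally with every element of `S`. -/
def integDual {n : ℕ} (G : Matrix (Fin n) (Fin n) ℤ) (S : Submodule ℤ (Fin n → ℚ)) :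
    Submodule ℤ (Fin n → ℚ) where
  carrier := {x | ∀ y ∈ S, ∃ m : ℤ, bilin G x y = (m : ℚ)}
  add_mem' := by
    intro a b ha hb y hy
    obtain ⟨m₁, h₁⟩ := ha y hy
    obtain ⟨m₂, h₂⟩ := hb y hy
    refine ⟨m₁ + m₂, ?_⟩
    simp only [bilin] at h₁ h₂ ⊢
    rw [add_dotProduct, h₁, h₂]
    push_cast
    ring
  zero_mem' := by
    intro y hy
    exact ⟨0, by simp [bilin]⟩
  smul_mem' := by
    intro c x hx y hy
    obtain ⟨m, h⟩ := hx y hy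
    refine ⟨c * m, ?_⟩
    simp only [bilin] at h ⊢
    rw [smul_dotProduct, h, zsmul_eq_mul]
    push_cast
    ring

/-- The dual lattice `S^* = {x ∈ S ⊗ ℚ : (x, S) ⊆ ℤ}` of a sublattice `S ⊆ ℚ^n`,
with respect to the bilinear form with Gram matrix `G`. -/
def dualOf {n : ℕ} (G : Matrix (Fin n) (Fin n) ℤ) (S : Submodule ℤ (Fin n → ℚ)) :
    Submodule ℤ (Fin n → ℚ) :=
  (Submodule.span ℚ (S : Set (Fin n → ℚ))).restrictScalars ℤ ⊓ integDual G S

/-- The discriminant group `A_S = S^*/S`. -/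
abbrev discOf {n : ℕ} (G : Matrix (Fin n) (Fin n) ℤ) (S : Submodule ℤ (Fin n → ℚ)) :=
  (dualOf G S) ⧸ (S.comap (dualOf G S).subtype)

/-- The minimal number of generators of an abelian group. -/
noncomputable def minGens (A : Type*) [AddCommGroup A] : ℕ :=
  sInf {k : ℕ | ∃ f : Fin k → A, AddSubgroup.closure (Set.range f) = ⊤}

/-- `G` has signature `(p, q)`: over `ℝ` it is congruent to the diagonal form with
`p` entries `+1` and `q` entries `-1`. -/
def hasSig (p q : ℕ) (G : Matrix (Fin (p + q)) (Fin (p + q)) ℤ) : Prop :=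
  ∃ P : Matrix (Fin (p + q)) (Fin (p + q)) ℝ, IsUnit P.det ∧
    Pᵀ * (G.map (Int.cast : ℤ → ℝ)) * P =
      Matrix.diagonal (fun i : Fin (p + q) => if (i : ℕ) < p then (1 : ℝ) else -1)

open Module

theorem Submodule.exists_comp_subtype_eq {R M N : Type*} [Ring R] [AddCommGroup M] [Module R M]
    [AddCommGroup N] [Module R N] (K : Submodule R M) [Projective R (M ⧸ K)] (μ : K →ₗ[R] N) :
    ∃ ℓ : M →ₗ[R] N, ℓ ∘ₗ K.subtype = μ := by
  obtain ⟨s, hs⟩ := projective_lifting_property K.mkQ LinearMap.id K.mkQ_surjective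
  have hr : ∀ x, x - s (K.mkQ x) ∈ K := fun x => by
    rw [← Submodule.Quotient.mk_eq_zero, Submodule.Quotient.mk_sub]
    exact sub_eq_zero.mpr (LinearMap.congr_fun hs (K.mkQ x)).symm
  refine ⟨μ ∘ₗ (LinearMap.id - s ∘ₗ K.mkQ).codRestrict K hr,
    LinearMap.ext fun x => congrArg μ (Subtype.ext ?_)⟩
  simp [(Submodule.Quotient.mk_eq_zero K).mpr x.2]

namespace Matrix

variable {R m n : Type*} [Fintype n]

theorem isTorsionFree_quotient_range_mulVecLin [CommRing R] [IsDomain R] (M : Matrix m n R)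
    (hM : ∀ (v : m → R) (k : R), k ≠ 0 → (∃ w, M *ᵥ w = k • v) → ∃ w, M *ᵥ w = v) :
    IsTorsionFree R ((m → R) ⧸ LinearMap.range M.mulVecLin) := by
  refine .of_smul_eq_zero fun k x hkx => ?_
  obtain ⟨v, rfl⟩ := Submodule.mkQ_surjective _ x
  refine or_iff_not_imp_left.mpr fun hk => ?_
  rw [← LinearMap.map_smul, Submodule.mkQ_apply, Submodule.Quotient.mk_eq_zero] at hkx
  rw [Submodule.mkQ_apply, Submodule.Quotient.mk_eq_zero]
  exact hM v k hk hkx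

theorem vecMul_surjective_of_isTorsionFree [Fintype m] [CommRing R] [IsDomain R]
    [IsPrincipalIdealRing R] [DecidableEq m] [DecidableEq n] (M : Matrix m n R)
    (hM : Function.Injective M.mulVecLin)
    [IsTorsionFree R ((m → R) ⧸ LinearMap.range M.mulVecLin)] :
    Function.Surjective M.vecMul := by
  intro u
  let e := LinearEquiv.ofInjective _ hM
  obtain ⟨ℓ, hℓ⟩ := (LinearMap.range M.mulVecLin).exists_comp_subtype_eq
    (dotProductEquiv R n u ∘ₗ e.symm.toLinearMap)
  refine ⟨(dotProductEquiv R m).symm ℓ, dotProduct_eq _ _ fun w => ?_⟩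
  have hℓw := LinearMap.congr_fun hℓ (e w)
  simp only [LinearMap.comp_apply, LinearEquiv.coe_coe, LinearEquiv.symm_apply_apply] at hℓw
  calc (dotProductEquiv R m).symm ℓ ᵥ* M ⬝ᵥ w = ℓ (M *ᵥ w) := by
        rw [← dotProduct_mulVec]
        exact LinearMap.congr_fun ((dotProductEquiv R m).apply_symm_apply ℓ) _
    _ = u ⬝ᵥ w := hℓw

theorem mulVecLin_injective_of_det_mul_ne_zero [Fintype m] [CommRing R] [IsDomain R]
    [DecidableEq n] (A : Matrix n m R) (M : Matrix m n R) (h : (A * M).det ≠ 0) :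
    Function.Injective M.mulVecLin := by
  rw [← LinearMap.ker_eq_bot, LinearMap.ker_eq_bot']
  intro w hw
  by_contra hw₀
  exact h (exists_mulVec_eq_zero_iff.mp ⟨w, hw₀, by rw [← mulVec_mulVec]; simp_all⟩)

theorem card_le_of_isUnit_det_mul [Fintype m] [CommRing R] [StrongRankCondition R]
    [DecidableEq n] (A : Matrix m n R) (B : Matrix n m R) (h : IsUnit (B * A).det) :
    Fintype.card n ≤ Fintype.card m :=
  calc Fintype.card n = (B * A).rank := (rank_of_isUnit _ ((isUnit_iff_isUnit_det _).mpr h)).symm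
    _ ≤ A.rank := rank_mul_le_right B A
    _ ≤ Fintype.card m := rank_le_card_height A

theorem isUnit_det_one_add_transpose_mul_self [Fintype m] [DecidableEq n] (B : Matrix m n ℝ) :
    IsUnit (1 + Bᵀ * B).det :=
  (PosDef.one.add_posSemidef (by simpa using posSemidef_conjTranspose_mul_self B)).isUnit.map
    detMonoidHom

end Matrix

theorem minGens_le_finrank {F A : Type*} [AddCommGroup F] [Module.Free ℤ F] [Module.Finite ℤ F]
    [AddCommGroup A] (f : F →+ A) (hf : Function.Surjective f) : minGens A ≤ finrank ℤ F := by
  let b := Module.finBasis ℤ F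
  refine Nat.sInf_le ⟨f ∘ b, ?_⟩
  rw [Set.range_comp, ← AddMonoidHom.map_closure, ← Submodule.span_int_eq_addSubgroupClosure,
    b.span_eq, Submodule.top_toAddSubgroup, ← AddMonoidHom.range_eq_map,
    AddMonoidHom.range_eq_top.mpr hf]

theorem minGens_le_finrank_sub {F A : Type*} [AddCommGroup F] [Module.Free ℤ F]
    [Module.Finite ℤ F] [AddCommGroup A] [Module ℤ A] (K : Submodule ℤ F)
    [IsTorsionFree ℤ (F ⧸ K)] (f : F →ₗ[ℤ] A) (hf : Function.Surjective f)
    (hK : K ≤ LinearMap.ker f) : minGens A ≤ finrank ℤ F - finrank ℤ K := by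
  have hlift : Function.Surjective (K.liftQ f hK) := fun a => by
    obtain ⟨x, rfl⟩ := hf a
    exact ⟨K.mkQ x, rfl⟩
  have := minGens_le_finrank (K.liftQ f hK).toAddMonoidHom hlift
  have := K.finrank_quotient_add_finrank
  omega

def signDiag (p q : ℕ) : Matrix (Fin (p + q)) (Fin (p + q)) ℝ :=
  diagonal fun i => if (i : ℕ) < p then 1 else -1

theorem submatrix_signDiag (p q : ℕ) :
    (signDiag p q).submatrix finSumFinEquiv finSumFinEquiv =
      (fromBlocks 1 0 0 (-1) : Matrix (Fin p ⊕ Fin q) (Fin p ⊕ Fin q) ℝ) := by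
  rw [signDiag, submatrix_diagonal_equiv, ← diagonal_one, ← diagonal_one, diagonal_neg,
    fromBlocks_diagonal]
  congr 1
  ext (i | i) <;> simp

theorem le_of_transpose_mul_signDiag_mul_eq {p q p' q' : ℕ}
    (C : Matrix (Fin (p' + q')) (Fin (p + q)) ℝ) (h : Cᵀ * signDiag p' q' * C = signDiag p q) :
    p ≤ p' ∧ q ≤ q' := by
  set C' := C.submatrix finSumFinEquiv finSumFinEquiv with hC'
  have hblocks : C'ᵀ * (fromBlocks 1 0 0 (-1) : Matrix (Fin p' ⊕ Fin q') (Fin p' ⊕ Fin q') ℝ) *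
      C' = fromBlocks 1 0 0 (-1) := by
    rw [← submatrix_signDiag, ← submatrix_signDiag, ← h, hC', transpose_submatrix,
      submatrix_mul_equiv, submatrix_mul_equiv]
  rw [← fromBlocks_toBlocks C', fromBlocks_transpose, fromBlocks_multiply, fromBlocks_multiply,
    fromBlocks_inj] at hblocks
  obtain ⟨h₁₁, -, -, h₂₂⟩ := hblocks
  simp only [Matrix.mul_one, Matrix.mul_zero, add_zero, zero_add, Matrix.mul_neg,
    Matrix.neg_mul] at h₁₁ h₂₂
  constructor
  · have hA : C'.toBlocks₁₁ᵀ * C'.toBlocks₁₁ = 1 + C'.toBlocks₂₁ᵀ * C'.toBlocks₂₁ := by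
      rw [← h₁₁]; abel
    simpa using C'.toBlocks₁₁.card_le_of_isUnit_det_mul _
      (hA ▸ C'.toBlocks₂₁.isUnit_det_one_add_transpose_mul_self)
  · have hB : C'.toBlocks₂₂ᵀ * C'.toBlocks₂₂ = 1 + C'.toBlocks₁₂ᵀ * C'.toBlocks₁₂ := by
      rw [← neg_neg (1 : Matrix (Fin q) (Fin q) ℝ), ← h₂₂]; abel
    simpa using C'.toBlocks₂₂.card_le_of_isUnit_det_mul _
      (hB ▸ C'.toBlocks₁₂.isUnit_det_one_add_transpose_mul_self)

theorem hasSig_le_of_transpose_mul_mul_eq {tp tm lp lm : ℕ}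
    {GrS : Matrix (Fin (tp + tm)) (Fin (tp + tm)) ℤ}
    {GrL : Matrix (Fin (lp + lm)) (Fin (lp + lm)) ℤ}
    (M : Matrix (Fin (lp + lm)) (Fin (tp + tm)) ℤ) (hM : Mᵀ * GrL * M = GrS)
    (hS : hasSig tp tm GrS) (hL : hasSig lp lm GrL) : tp ≤ lp ∧ tm ≤ lm := by
  obtain ⟨P, -, hP⟩ := hS
  obtain ⟨Q, hQ, hQL⟩ := hL
  have hMR : (Mᵀ * GrL * M).map (Int.cast : ℤ → ℝ) =
      (M.map (Int.cast : ℤ → ℝ))ᵀ * GrL.map (Int.cast : ℤ → ℝ) * M.map (Int.cast : ℤ → ℝ) := by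
    simp only [← Int.coe_castRingHom, Matrix.map_mul, transpose_map]
  refine le_of_transpose_mul_signDiag_mul_eq (Q⁻¹ * M.map (Int.cast : ℤ → ℝ) * P) ?_
  rw [signDiag, signDiag, ← hP, ← hQL, ← hM, hMR]
  simp only [transpose_mul, transpose_nonsing_inv, Matrix.mul_assoc,
    nonsing_inv_mul_cancel_left _ _ (isUnit_det_transpose Q hQ),
    mul_nonsing_inv_cancel_left _ _ hQ]

def castVec (n : ℕ) : (Fin n → ℤ) →ₗ[ℤ] (Fin n → ℚ) :=
  (Int.castAddHom ℚ).toIntLinearMap.compLeft (Fin n)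

@[simp]
theorem castVec_apply {n : ℕ} (w : Fin n → ℤ) (i : Fin n) : castVec n w i = w i := rfl

@[simp]
theorem castVec_single {n : ℕ} (i : Fin n) : castVec n (Pi.single i 1) = Pi.single i 1 := by
  ext j
  simp [Pi.single_apply]

theorem castVec_vecMul {m n : ℕ} (w : Fin m → ℤ) (A : Matrix (Fin m) (Fin n) ℤ) :
    castVec m w ᵥ* A.map (Int.cast : ℤ → ℚ) = castVec n (w ᵥ* A) := by
  ext i
  simp [vecMul, dotProduct]

theorem castVec_dotProduct {n : ℕ} (u w : Fin n → ℤ) :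
    castVec n u ⬝ᵥ castVec n w = ((u ⬝ᵥ w : ℤ) : ℚ) := by
  simp [dotProduct]

theorem latticeZ_eq_range (n : ℕ) : latticeZ n = LinearMap.range (castVec n) := by
  rw [LinearMap.range_eq_map, ← (Pi.basisFun ℤ (Fin n)).span_eq, Submodule.map_span,
    ← Set.range_comp, latticeZ]
  congr
  ext i : 1
  simp

theorem span_latticeZ (n : ℕ) : Submodule.span ℚ (latticeZ n : Set (Fin n → ℚ)) = ⊤ := by
  rw [latticeZ, Submodule.span_span_of_tower]
  exact funext (Pi.basisFun_apply ℚ (Fin n)) ▸ (Pi.basisFun ℚ (Fin n)).span_eq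

theorem mem_dualOf_latticeZ_iff {n : ℕ} (G : Matrix (Fin n) (Fin n) ℤ) (x : Fin n → ℚ) :
    x ∈ dualOf G (latticeZ n) ↔
      x ᵥ* G.map (Int.cast : ℤ → ℚ) ∈ LinearMap.range (castVec n) := by
  rw [dualOf, span_latticeZ, Submodule.restrictScalars_top, top_inf_eq]
  change (∀ y ∈ latticeZ n, ∃ m : ℤ, bilin G x y = m) ↔ _
  simp only [latticeZ_eq_range, LinearMap.mem_range, forall_exists_index,
    forall_apply_eq_imp_iff, bilin, dotProduct_mulVec]
  constructor
  · intro h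
    choose u hu using fun i => h (Pi.single i 1)
    exact ⟨u, funext fun i => by simpa using (hu i).symm⟩
  · rintro ⟨u, hu⟩ w
    exact ⟨u ⬝ᵥ w, by rw [← hu, castVec_dotProduct]⟩

theorem isUnit_det_map_intCast {n : ℕ} {G : Matrix (Fin n) (Fin n) ℤ} (hG : G.det ≠ 0) :
    IsUnit (G.map (Int.cast : ℤ → ℚ)).det := by
  rw [← Int.cast_det, isUnit_iff_ne_zero]
  exact_mod_cast hG

/-- `u ↦ u G⁻¹`: the dual lattice of `ℤⁿ` is `ℤⁿ G⁻¹`. -/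
noncomputable def toDual {n : ℕ} (G : Matrix (Fin n) (Fin n) ℤ) (hG : G.det ≠ 0) :
    (Fin n → ℤ) →ₗ[ℤ] dualOf G (latticeZ n) :=
  LinearMap.codRestrict _
    ((G.map (Int.cast : ℤ → ℚ))⁻¹.vecMulLinear.restrictScalars ℤ ∘ₗ castVec n)
    fun u => (mem_dualOf_latticeZ_iff G _).mpr
      ⟨u, by simp [vecMul_vecMul, nonsing_inv_mul _ (isUnit_det_map_intCast hG)]⟩

theorem toDual_surjective {n : ℕ} (G : Matrix (Fin n) (Fin n) ℤ) (hG : G.det ≠ 0) :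
    Function.Surjective (toDual G hG) := by
  rintro ⟨x, hx⟩
  obtain ⟨u, hu⟩ := (mem_dualOf_latticeZ_iff G x).mp hx
  refine ⟨u, Subtype.ext ?_⟩
  simp [toDual, hu, vecMul_vecMul, mul_nonsing_inv _ (isUnit_det_map_intCast hG)]

theorem coe_toDual_vecMul {n : ℕ} (G : Matrix (Fin n) (Fin n) ℤ) (hG : G.det ≠ 0)
    (w : Fin n → ℤ) : (toDual G hG (w ᵥ* G) : Fin n → ℚ) = castVec n w := by
  simp [toDual, ← castVec_vecMul, vecMul_vecMul, mul_nonsing_inv _ (isUnit_det_map_intCast hG)]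

theorem minGens_discOf_le_of_primitive {n N : ℕ} {GrS : Matrix (Fin n) (Fin n) ℤ}
    {GrL : Matrix (Fin N) (Fin N) ℤ} (hS : GrS.det ≠ 0) (hL : IsUnit GrL.det)
    (M : Matrix (Fin N) (Fin n) ℤ) (hM : Mᵀ * GrL * M = GrS)
    (hprim : ∀ (v : Fin N → ℤ) (k : ℤ), k ≠ 0 → (∃ w, M *ᵥ w = k • v) → ∃ w, M *ᵥ w = v) :
    minGens (discOf GrS (latticeZ n)) ≤ N - n := by
  have hinj : Function.Injective M.mulVecLin :=
    (Mᵀ * GrL).mulVecLin_injective_of_det_mul_ne_zero M (hM ▸ hS)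
  have := M.isTorsionFree_quotient_range_mulVecLin hprim
  let π : (Fin N → ℤ) →ₗ[ℤ] discOf GrS (latticeZ n) :=
    ((latticeZ n).comap (dualOf GrS (latticeZ n)).subtype).mkQ ∘ₗ toDual GrS hS ∘ₗ
      (GrL * M).vecMulLinear
  have hπ : Function.Surjective π := by
    refine (Submodule.mkQ_surjective _).comp ((toDual_surjective GrS hS).comp ?_)
    have hGrL : Function.Surjective GrL.vecMul :=
      vecMul_surjective_iff_isUnit.mpr ((isUnit_iff_isUnit_det _).mpr hL)
    convert (M.vecMul_surjective_of_isTorsionFree hinj).comp hGrL using 1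
    ext x : 1
    simp [vecMul_vecMul]
  have hK : LinearMap.range M.mulVecLin ≤ LinearMap.ker π := by
    rintro _ ⟨w, rfl⟩
    have hw : (M *ᵥ w) ᵥ* (GrL * M) = w ᵥ* GrS := by
      rw [← vecMul_transpose, vecMul_vecMul, ← hM, Matrix.mul_assoc]
    simp only [LinearMap.mem_ker, π, LinearMap.comp_apply, mulVecLin_apply, coe_vecMulLinear, hw,
      Submodule.mkQ_apply, Submodule.Quotient.mk_eq_zero]
    rw [Submodule.mem_comap, Submodule.subtype_apply, coe_toDual_vecMul, latticeZ_eq_range]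
    exact LinearMap.mem_range_self _ w
  simpa [LinearMap.finrank_range_of_inj hinj] using minGens_le_finrank_sub _ π hπ hK

theorem necessity_of_embedding_conditions_general (tp tm lp lm : ℕ)
    (GrS : Matrix (Fin (tp + tm)) (Fin (tp + tm)) ℤ)
    (GrL : Matrix (Fin (lp + lm)) (Fin (lp + lm)) ℤ)
    (hSnd : GrS.det ≠ 0)
    (hSsig : hasSig tp tm GrS)
    (hLdet : GrL.det = 1 ∨ GrL.det = -1)
    (hLsig : hasSig lp lm GrL)
    (hemb : ∃ M : Matrix (Fin (lp + lm)) (Fin (tp + tm)) ℤ,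
      Mᵀ * GrL * M = GrS ∧
      ∀ (v : Fin (lp + lm) → ℤ) (k : ℤ), k ≠ 0 →
        (∃ w, M.mulVec w = k • v) → ∃ w, M.mulVec w = v) :
    tp ≤ lp ∧ tm ≤ lm ∧
    minGens (discOf GrS (latticeZ (tp + tm))) ≤ (lp + lm) - (tp + tm) := by
  obtain ⟨M, hM, hprim⟩ := hemb
  obtain ⟨htp, htm⟩ := hasSig_le_of_transpose_mul_mul_eq M hM hSsig hLsig
  have hLunit : IsUnit GrL.det := by
    rcases hLdet with h | h <;> simp [h]
  exact ⟨htp, htm, minGens_discOf_le_of_primitive hSnd hLunit M hM hprim⟩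

/-- necessity part of conditions (2) in Nikulin's Theorem 1.12.2:
if an even nondegenerate lattice `S` of signature `(tp, tm)` (Gram matrix `GrS`)
admits a primitive embedding into an even unimodular lattice `L` of signature
`(lp, lm)` (Gram matrix `GrL`), then `tp ≤ lp`, `tm ≤ lm`, and the minimal number
of generators of the discriminant group `A_S = S^*/S` satisfies
`l(A_S) ≤ (lp + lm) − (tp + tm)`. -/
theorem necessity_of_embedding_conditions (tp tm lp lm : ℕ)
    (GrS : Matrix (Fin (tp + tm)) (Fin (tp + tm)) ℤ)
    (GrL : Matrix (Fin (lp + lm)) (Fin (lp + lm)) ℤ)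
    (hSsymm : GrS.IsSymm)
    (hSeven : ∀ v : Fin (tp + tm) → ℤ, 2 ∣ v ⬝ᵥ GrS.mulVec v)
    (hSnd : GrS.det ≠ 0)
    (hSsig : hasSig tp tm GrS)
    (hLsymm : GrL.IsSymm)
    (hLeven : ∀ v : Fin (lp + lm) → ℤ, 2 ∣ v ⬝ᵥ GrL.mulVec v)
    (hLdet : GrL.det = 1 ∨ GrL.det = -1)
    (hLsig : hasSig lp lm GrL)
    (hemb : ∃ M : Matrix (Fin (lp + lm)) (Fin (tp + tm)) ℤ,
      Mᵀ * GrL * M = GrS ∧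
      ∀ (v : Fin (lp + lm) → ℤ) (k : ℤ), k ≠ 0 →
        (∃ w, M.mulVec w = k • v) → ∃ w, M.mulVec w = v) :
    tp ≤ lp ∧ tm ≤ lm ∧
    minGens (discOf GrS (latticeZ (tp + tm))) ≤ (lp + lm) - (tp + tm) :=
  necessity_of_embedding_conditions_general tp tm lp lm GrS GrL hSnd hSsig hLdet hLsig hemb
end

section
/- Let φ_0, φ_1, φ_2 be the following permutations of a 24-element set of symbols: φ_0 = (α_{1,1} α_{7,1})(α_{1,2} α_{7,2})(α_{4,3} α_{5,3})(α_{4,4} α_{5,4})(α_{2,1} α_{6,1})(α_{3,1} α_{5,1})(α_{2,2} α_{6,2})(α_{3,2} α_{5,2}), φ_1 = (α_{1,1} α_{1,2})(α_{7,1} α_{7,2})(α_{4,4} α_{5,4})(α_{2,1} α_{2,2})(α_{3,1} α_{3,2})(α_{4,1} α_{4,2})(α_{5,1} α_{5,2})(α_{6,1} α_{6,2}), φ_2 = (α_{1,2} α_{7,2})(α_{4,3} α_{4,4})(α_{5,3} α_{5,4})(α_{2,2} α_{6,2})(α_{3,2} α_{5,2})(α_{1,3} α_{1,4})(α_{2,3}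 α_{2,4})(α_{3,3} α_{3,4}). Then each φ_k is an involution, and the group ⟨φ_0, φ_1, φ_2⟩ has order exactly 8. -/
/-- The point of `{1, …, 24}` labelled `m`, encoded as `m - 1 : Fin 24`. -/
def pt (m : ℕ) : Fin 24 := ⟨(m - 1) % 24, Nat.mod_lt _ (by norm_num)⟩

/-- The transposition `(a b)`. -/
def c2 (a b : Fin 24) : Equiv.Perm (Fin 24) := Equiv.swap a b

/-- The 3-cycle `(a b c)`. -/
def c3 (a b c : Fin 24) : Equiv.Perm (Fin 24) := Equiv.swap a c * Equiv.swap a b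

/-- The 4-cycle `(a b c d)`. -/
def c4 (a b c d : Fin 24) : Equiv.Perm (Fin 24) :=
  Equiv.swap a d * Equiv.swap a c * Equiv.swap a b

/-- The 5-cycle `(a b c d e)`. -/
def c5 (a b c d e : Fin 24) : Equiv.Perm (Fin 24) :=
  Equiv.swap a e * Equiv.swap a d * Equiv.swap a c * Equiv.swap a b

/-- The 7-cycle `(a b c d e f g)`. -/
def c7 (a b c d e f g : Fin 24) : Equiv.Perm (Fin 24) :=
  Equiv.swap a g * Equiv.swap a f * Equiv.swap a e * Equiv.swap a d *
    Equiv.swap a c * Equiv.swap a b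

/-- The 8-cycle `(a b c d e f g h)`. -/
def c8 (a b c d e f g h : Fin 24) : Equiv.Perm (Fin 24) :=
  Equiv.swap a h * Equiv.swap a g * Equiv.swap a f * Equiv.swap a e *
    Equiv.swap a d * Equiv.swap a c * Equiv.swap a b

/-- The set of orbits of a subgroup `H ≤ Sym({1,…,24})` on `{1,…,24}`. -/
def orbitsOf (H : Subgroup (Equiv.Perm (Fin 24))) : Set (Set (Fin 24)) :=
  Set.range fun x : Fin 24 => {y | ∃ g ∈ H, g x = y}

/-- The 24 symbols: `α_{i,1}, α_{i,2}` for `1 ≤ i ≤ 7` (the two `A₇` components) and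
`α_{i,3}, α_{i,4}` for `1 ≤ i ≤ 5` (the two `D₅` components), identified with
`{1,…,24}` by a fixed bijection. -/
def al (i j : ℕ) : Fin 24 :=
  pt (if j = 1 then i else if j = 2 then 7 + i else if j = 3 then 14 + i else 19 + i)

/-- `φ₀ = (α₁₁ α₇₁)(α₁₂ α₇₂)(α₄₃ α₅₃)(α₄₄ α₅₄)(α₂₁ α₆₁)(α₃₁ α₅₁)(α₂₂ α₆₂)(α₃₂ α₅₂)`. -/
def phi0 : Equiv.Perm (Fin 24) :=
  c2 (al 1 1) (al 7 1) * c2 (al 1 2) (al 7 2) * c2 (al 4 3) (al 5 3) *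
  c2 (al 4 4) (al 5 4) * c2 (al 2 1) (al 6 1) * c2 (al 3 1) (al 5 1) *
  c2 (al 2 2) (al 6 2) * c2 (al 3 2) (al 5 2)

/-- `φ₁ = (α₁₁ α₁₂)(α₇₁ α₇₂)(α₄₄ α₅₄)(α₂₁ α₂₂)(α₃₁ α₃₂)(α₄₁ α₄₂)(α₅₁ α₅₂)(α₆₁ α₆₂)`. -/
def phi1 : Equiv.Perm (Fin 24) :=
  c2 (al 1 1) (al 1 2) * c2 (al 7 1) (al 7 2) * c2 (al 4 4) (al 5 4) *
  c2 (al 2 1) (al 2 2) * c2 (al 3 1) (al 3 2) * c2 (al 4 1) (al 4 2) *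
  c2 (al 5 1) (al 5 2) * c2 (al 6 1) (al 6 2)

/-- `φ₂ = (α₁₂ α₇₂)(α₄₃ α₄₄)(α₅₃ α₅₄)(α₂₂ α₆₂)(α₃₂ α₅₂)(α₁₃ α₁₄)(α₂₃ α₂₄)(α₃₃ α₃₄)`. -/
def phi2 : Equiv.Perm (Fin 24) :=
  c2 (al 1 2) (al 7 2) * c2 (al 4 3) (al 4 4) * c2 (al 5 3) (al 5 4) *
  c2 (al 2 2) (al 6 2) * c2 (al 3 2) (al 5 2) * c2 (al 1 3) (al 1 4) *
  c2 (al 2 3) (al 2 4) * c2 (al 3 3) (al 3 4)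


set_option maxRecDepth 4000
set_option maxHeartbeats 1600000

def elems : Finset (Equiv.Perm (Fin 24)) :=
  {1, phi0, phi1, phi2, phi0 * phi1, phi0 * phi2, phi1 * phi2, phi0 * (phi1 * phi2)}

lemma sq0 : phi0 * phi0 = 1 := by decide
lemma sq1 : phi1 * phi1 = 1 := by decide
lemma sq2 : phi2 * phi2 = 1 := by decide
lemma comm01 : phi1 * phi0 = phi0 * phi1 := by decide
lemma comm02 : phi2 * phi0 = phi0 * phi2 := by decide
lemma rel21 : phi2 * phi1 = phi0 * (phi1 * phi2) := by decide
lemma ne0 : phi0 ≠ 1 := by decide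
lemma ne1 : phi1 ≠ 1 := by decide
lemma ne2 : phi2 ≠ 1 := by decide
lemma elems_card : elems.card = 8 := by decide

attribute [irreducible] phi0 phi1 phi2

lemma sq0' (x : Equiv.Perm (Fin 24)) : phi0 * (phi0 * x) = x := by
  rw [← mul_assoc, sq0, one_mul]
lemma sq1' (x : Equiv.Perm (Fin 24)) : phi1 * (phi1 * x) = x := by
  rw [← mul_assoc, sq1, one_mul]
lemma sq2' (x : Equiv.Perm (Fin 24)) : phi2 * (phi2 * x) = x := by
  rw [← mul_assoc, sq2, one_mul]
lemma comm01' (x : Equiv.Perm (Fin 24)) : phi1 * (phi0 * x) = phi0 * (phi1 * x) := by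
  rw [← mul_assoc, comm01, mul_assoc]
lemma comm02' (x : Equiv.Perm (Fin 24)) : phi2 * (phi0 * x) = phi0 * (phi2 * x) := by
  rw [← mul_assoc, comm02, mul_assoc]
lemma rel21' (x : Equiv.Perm (Fin 24)) : phi2 * (phi1 * x) = phi0 * (phi1 * (phi2 * x)) := by
  rw [← mul_assoc, rel21, mul_assoc, mul_assoc]

lemma m1 : (1 : Equiv.Perm (Fin 24)) ∈ elems := Finset.mem_insert_self _ _
lemma m2 : phi0 ∈ elems := Finset.mem_insert_of_mem (Finset.mem_insert_self _ _)
lemma m3 : phi1 ∈ elems :=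
  Finset.mem_insert_of_mem (Finset.mem_insert_of_mem (Finset.mem_insert_self _ _))
lemma m4 : phi2 ∈ elems :=
  Finset.mem_insert_of_mem (Finset.mem_insert_of_mem (Finset.mem_insert_of_mem
    (Finset.mem_insert_self _ _)))
lemma m5 : phi0 * phi1 ∈ elems :=
  Finset.mem_insert_of_mem (Finset.mem_insert_of_mem (Finset.mem_insert_of_mem
    (Finset.mem_insert_of_mem (Finset.mem_insert_self _ _))))
lemma m6 : phi0 * phi2 ∈ elems :=
  Finset.mem_insert_of_mem (Finset.mem_insert_of_mem (Finset.mem_insert_of_mem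
    (Finset.mem_insert_of_mem (Finset.mem_insert_of_mem (Finset.mem_insert_self _ _)))))
lemma m7 : phi1 * phi2 ∈ elems :=
  Finset.mem_insert_of_mem (Finset.mem_insert_of_mem (Finset.mem_insert_of_mem
    (Finset.mem_insert_of_mem (Finset.mem_insert_of_mem (Finset.mem_insert_of_mem
      (Finset.mem_insert_self _ _))))))
lemma m8 : phi0 * (phi1 * phi2) ∈ elems :=
  Finset.mem_insert_of_mem (Finset.mem_insert_of_mem (Finset.mem_insert_of_mem
    (Finset.mem_insert_of_mem (Finset.mem_insert_of_mem (Finset.mem_insert_of_mem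
      (Finset.mem_insert_of_mem (Finset.mem_singleton_self _)))))))

lemma elems_mul : ∀ x ∈ elems, ∀ y ∈ elems, x * y ∈ elems := by
  intro x hx y hy
  simp only [elems, Finset.mem_insert, Finset.mem_singleton] at hx hy
  rcases hx with rfl | rfl | rfl | rfl | rfl | rfl | rfl | rfl <;>
    rcases hy with rfl | rfl | rfl | rfl | rfl | rfl | rfl | rfl <;>
    (try simp only [mul_assoc, one_mul, mul_one, sq0, sq1, sq2, sq0', sq1', sq2',
      comm01, comm02, rel21, comm01', comm02', rel21']) <;>
    first
      | exact m1 | exact m2 | exact m3 | exact m4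
      | exact m5 | exact m6 | exact m7 | exact m8

lemma elems_inv : ∀ x ∈ elems, x⁻¹ ∈ elems := by
  intro x hx
  simp only [elems, Finset.mem_insert, Finset.mem_singleton] at hx
  rcases hx with rfl | rfl | rfl | rfl | rfl | rfl | rfl | rfl
  · rw [inv_one]; exact m1
  · rw [inv_eq_of_mul_eq_one_right sq0]; exact m2
  · rw [inv_eq_of_mul_eq_one_right sq1]; exact m3
  · rw [inv_eq_of_mul_eq_one_right sq2]; exact m4
  · rw [inv_eq_of_mul_eq_one_right (by
      simp only [mul_assoc, one_mul, mul_one, sq0, sq1, sq2, sq0', sq1', sq2',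
        comm01, comm02, rel21, comm01', comm02', rel21'] :
      phi0 * phi1 * (phi0 * phi1) = 1)]; exact m5
  · rw [inv_eq_of_mul_eq_one_right (by
      simp only [mul_assoc, one_mul, mul_one, sq0, sq1, sq2, sq0', sq1', sq2',
        comm01, comm02, rel21, comm01', comm02', rel21'] :
      phi0 * phi2 * (phi0 * phi2) = 1)]; exact m6
  · rw [inv_eq_of_mul_eq_one_right (by
      simp only [mul_assoc, one_mul, mul_one, sq0, sq1, sq2, sq0', sq1', sq2',
        comm01, comm02, rel21, comm01', comm02', rel21'] :
      phi1 * phi2 * (phi0 * (phi1 * phi2)) = 1)]; exact m8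
  · rw [inv_eq_of_mul_eq_one_right (by
      simp only [mul_assoc, one_mul, mul_one, sq0, sq1, sq2, sq0', sq1', sq2',
        comm01, comm02, rel21, comm01', comm02', rel21'] :
      phi0 * (phi1 * phi2) * (phi1 * phi2) = 1)]; exact m7

def G : Subgroup (Equiv.Perm (Fin 24)) where
  carrier := ↑elems
  one_mem' := m1
  mul_mem' := fun hx hy => elems_mul _ hx _ hy
  inv_mem' := fun {x} hx => elems_inv x hx

/-- each `φ_k` is an involution, and the group
`⟨φ₀, φ₁, φ₂⟩ = A(N₁₆)` has order exactly 8. -/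
theorem AN16_order_eight :
    (phi0 * phi0 = 1 ∧ phi0 ≠ 1) ∧ (phi1 * phi1 = 1 ∧ phi1 ≠ 1) ∧
    (phi2 * phi2 = 1 ∧ phi2 ≠ 1) ∧
    Nat.card ↥(Subgroup.closure {phi0, phi1, phi2} : Subgroup (Equiv.Perm (Fin 24)))
      = 8 := by
  refine ⟨⟨sq0, ne0⟩, ⟨sq1, ne1⟩, ⟨sq2, ne2⟩, ?_⟩
  have hG : Subgroup.closure {phi0, phi1, phi2} = G := by
    apply le_antisymm
    · rw [Subgroup.closure_le]
      intro x hx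
      have mem : ∀ z, z ∈ elems → z ∈ G := fun _ h => h
      rcases hx with h | h | h <;> subst h
      · exact mem _ m2
      · exact mem _ m3
      · exact mem _ m4
    · intro x hx
      have h0 : phi0 ∈ Subgroup.closure ({phi0, phi1, phi2} : Set (Equiv.Perm (Fin 24))) :=
        Subgroup.subset_closure (by simp)
      have h1 : phi1 ∈ Subgroup.closure ({phi0, phi1, phi2} : Set (Equiv.Perm (Fin 24))) :=
        Subgroup.subset_closure (by simp)
      have h2 : phi2 ∈ Subgroup.closure ({phi0, phi1, phi2} : Set (Equiv.Perm (Fin 24))) :=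
        Subgroup.subset_closure (by simp)
      have hx' : x ∈ elems := hx
      simp only [elems, Finset.mem_insert, Finset.mem_singleton] at hx'
      rcases hx' with rfl | rfl | rfl | rfl | rfl | rfl | rfl | rfl
      · exact one_mem _
      · exact h0
      · exact h1
      · exact h2
      · exact mul_mem h0 h1
      · exact mul_mem h0 h2
      · exact mul_mem h1 h2
      · exact mul_mem h0 (mul_mem h1 h2)
  rw [hG]
  have hc : Nat.card G = (↑elems : Set (Equiv.Perm (Fin 24))).ncard := by
    rw [← Nat.card_coe_set_eq]
    rfl
  rw [hc, Set.ncard_coe_finset, elems_card]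
end
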